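/- arXiv:0810.0392 — 4 statements merged into one kernel-verified Lean document; each statement's English description precedes it below -/
import Mathlib

section
/- Consider the discrete-time exclusion-voter chain with parameters (β,p). (i) The ground-state configuration 𝒟₀ is an absorbing state under Pr_{β,1} for every β ∈ [0,1]. (ii) If β ≠ 1 and (β,p) ∉ {(0,0),(0,1)}, then all states in 𝒟∖{𝒟₀} communicate under Pr_{β,p}. (iii) If β ≠ 1, p < 1 and (β,p) ≠ (0,0), then all states in 𝒟 communicate under Pr_{β,p} and the chain ξ is irreducible and aperiodic. -/
open MeasureTheory Filter
open scoped ENNReal NNReal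

namespace EV

/-- A configuration of the exclusion-voter model is the finite hybrid-zone word
(`false` = 0, `true` = 1); the full two-sided configuration is `1^∞ w 0^∞`. -/
abbrev Word := List Bool

/-- Canonical (normalized) words: empty (the ground state `𝒟₀`) or starting with
a `0` and ending with a `1`; these are in bijection with the configuration space `𝒟`. -/
def IsConfig (w : Word) : Prop :=
  w = [] ∨ (w.head? = some false ∧ w.getLast? = some true)

/-- The ground-state Heaviside configuration `𝒟₀ = …111000…`. -/
def groundState : Word := []

/-- Pad a word with one boundary symbol of the adjacent infinite block on each side. -/
def pad (w : Word) : Word := true :: (w ++ [false])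

/-- Normalize: strip leading `1`s (they merge into the left infinite block of `1`s)
and trailing `0`s (they merge into the right infinite block of `0`s). -/
def strip (w : Word) : Word :=
  ((w.dropWhile (· = true)).reverse.dropWhile (· = false)).reverse

def setPair (w : Word) (i : ℕ) (a b : Bool) : Word := (w.set i a).set (i + 1) b

def swapPair (w : Word) (i : ℕ) : Word :=
  setPair w i (w.getD (i + 1) true) (w.getD i true)

/-- Indices of the unlike adjacent pairs (`01` or `10`), read off the padded word. -/
def unlike (w : Word) : List ℕ :=
  (List.range (w.length + 1)).filter
    (fun i => (pad w).getD i true ≠ (pad w).getD (i + 1) true)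

/-- One-step transition kernel of the discrete-time exclusion-voter chain with mixing
parameter `β` and exclusion parameter `p`: an unlike adjacent pair is chosen uniformly
at random; with probability `β` a voter move flips the pair to `00` or `11` (each with
probability `1/2`); with probability `1-β` an exclusion move swaps a `01` with
probability `p` and a `10` with probability `1-p` (otherwise no change). -/
noncomputable def P (β p : ℝ) (w w' : Word) : ℝ :=
  ((unlike w).map (fun i =>
    let a := (pad w).getD i true
    let swapProb := if a then 1 - p else p
    ((unlike w).length : ℝ)⁻¹ *
      (β * (1 / 2) * (if strip (setPair (pad w) i false false) = w' then 1 else 0)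
       + β * (1 / 2) * (if strip (setPair (pad w) i true true) = w' then 1 else 0)
       + (1 - β) * swapProb * (if strip (swapPair (pad w) i) = w' then 1 else 0)
       + (1 - β) * (1 - swapProb) * (if w = w' then 1 else 0)))).sum

/-- `n`-step transition probabilities. -/
noncomputable def Pn (β p : ℝ) : ℕ → Word → Word → ℝ
  | 0 => fun w w' => if w = w' then 1 else 0
  | n + 1 => fun w w' => ∑' z : Word, Pn β p n w z * P β p z w'

/-- `w'` is accessible from `w`: some `n`-step transition probability is positive. -/
def Accessible (β p : ℝ) (w w' : Word) : Prop :=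
  ∃ n : ℕ, 0 < n ∧ 0 < Pn β p n w w'

/-- Two states communicate: each is accessible from the other. -/
def Communicate (β p : ℝ) (w w' : Word) : Prop :=
  Accessible β p w w' ∧ Accessible β p w' w

instance : MeasurableSpace Word := ⊤

/-- `ξ` is (a realization of) the discrete-time exclusion-voter Markov chain with
parameters `(β, p)` under the probability measure `μ`. -/
def IsEVChain (β p : ℝ) {Ω : Type*} [MeasurableSpace Ω] (μ : Measure Ω)
    (ξ : ℕ → Ω → Word) : Prop :=
  (∀ t, Measurable (ξ t)) ∧
  ∀ (t : ℕ) (path : ℕ → Word),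
    μ {ω | ∀ i ≤ t + 1, ξ i ω = path i}
      = μ {ω | ∀ i ≤ t, ξ i ω = path i} * ENNReal.ofReal (P β p (path t) (path (t + 1)))

/-- The relaxation time `τ = min {t ∈ ℕ, t ≥ 1 : ξ_t = 𝒟₀}` (`∞` if there is no such `t`). -/
noncomputable def relaxTime {Ω : Type*} (ξ : ℕ → Ω → Word) (ω : Ω) : ℝ≥0∞ :=
  sInf {r : ℝ≥0∞ | ∃ t : ℕ, 0 < t ∧ ξ t ω = groundState ∧ r = (t : ℝ≥0∞)}

/-- The size `|S|` of the hybrid zone. -/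
def hz (w : Word) : ℕ := w.length

/-- The number of blocks `N(S)`: the number of (finite) `1`-blocks of the hybrid zone. -/
def nb (w : Word) : ℕ :=
  ((Finset.range w.length).filter
    (fun b => w.getD b false = true ∧ (b = 0 ∨ w.getD (b - 1) true = false))).card

/-- Number of `0`s among the first `c` positions of the hybrid zone. -/
def z0 (w : Word) (c : ℕ) : ℕ :=
  ((Finset.range c).filter (fun a => w.getD a true = false)).card

/-- Number of `1`s of the hybrid zone at positions `≥ c`. -/
def o1 (w : Word) (c : ℕ) : ℕ :=
  ((Finset.Ico c w.length).filter (fun b => w.getD b false = true)).card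

/-- `f₁(S) = Σᵢ mᵢ Rᵢ = Σᵢ nᵢ Tᵢ`: each `1` contributes the number of `0`s to its left. -/
def f1 (w : Word) : ℕ :=
  ∑ b ∈ (Finset.range w.length).filter (fun b => w.getD b false = true), z0 w b

/-- `f₂(S) = (1/2)(Σᵢ mᵢ Rᵢ² + Σᵢ nᵢ Tᵢ²)`: each `1` contributes the squared number of
`0`s to its left, each `0` the squared number of `1`s to its right. -/
noncomputable def f2 (w : Word) : ℝ :=
  (1 / 2) *
    ((∑ b ∈ (Finset.range w.length).filter (fun b => w.getD b false = true),
        ((z0 w b : ℝ)) ^ 2)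
     + (∑ a ∈ (Finset.range w.length).filter (fun a => w.getD a true = false),
        ((o1 w (a + 1) : ℝ)) ^ 2))

/-- `g(S) = max_{1 ≤ k ≤ N} R_k T_k`: the maximum over the `01`-corners of
(number of `0`s up to the corner) × (number of `1`s after the corner). -/
def gfun (w : Word) : ℕ :=
  ((Finset.range w.length).filter
    (fun a => w.getD a true = false ∧ w.getD (a + 1) false = true)).sup
    (fun a => z0 w (a + 1) * o1 w (a + 1))

/-- `φ₁(S) = Σᵢ Σ_{j=R_{i-1}+1}^{R_i} Σ_{k=1}^{T_i} 1/(j+k)`: the `j`-th `0` (at position `a`,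
so `j = z0 w (a+1)`) contributes `Σ_{k=1}^{T} 1/(j+k)` with `T` the number of `1`s to its right. -/
noncomputable def phi1 (w : Word) : ℝ :=
  ∑ a ∈ (Finset.range w.length).filter (fun a => w.getD a true = false),
    ∑ k ∈ Finset.Icc 1 (o1 w (a + 1)), (1 : ℝ) / ((z0 w (a + 1) : ℝ) + (k : ℝ))

/-! Every configuration in the class under consideration is joined, in both directions, to the
one-block configuration `01` by steps of positive probability, and every state has a positive
holding probability; this gives communication and aperiodicity. Which steps are available depends
on `(β, p)`:
* for `β > 0`, voter moves delete the leading `0` and flip a leading `01` to `00`, so every word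
  shrinks to `01`;
* for `β > 0` and `p < 1`, every word grows from `01` by prepending `0`s (voter) and inserting
  `1`s after the leading `0` (a `10 → 01` exclusion move at the left boundary);
* for `β > 0` and `p = 1`, growth goes through the sorted words `0ᵃ1ᵇ`, from which `01 → 10`
  swaps create the descents, by induction on length plus number of inverted pairs `10`;
* for `0 < p < 1` every exclusion move is reversible, and every excited word other than `01`
  has a `01 → 10` move (possibly at a boundary, where it deletes a letter) that lowers the number
  of pairs `01` by one.
Part (i) is the computation `P(𝒟₀, 𝒟₀) = β + (1 - β) p`. -/

open Set

/-- The configurations other than the ground state `𝒟₀`. -/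
def IsExcited (w : Word) : Prop := w.head? = some false ∧ w.getLast? = some true

section ExcitedWords

variable {w t x y : Word}

lemma isExcited_cons_false_iff : IsExcited (false :: t) ↔ t.getLast? = some true := by
  cases t <;> simp [IsExcited]

lemma isExcited_cons_false_cons (b : Bool) (ht : IsExcited (false :: t)) :
    IsExcited (false :: b :: t) :=
  isExcited_cons_false_iff.2 (by rw [List.getLast?_cons, isExcited_cons_false_iff.1 ht]; rfl)

lemma isExcited_append_true_iff : IsExcited (x ++ [true]) ↔ x.head? = some false := by
  cases x <;> simp [IsExcited, List.getLast?_cons]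

lemma isExcited_append_cons_cons (a b : Bool) (hx : x.head? = some false)
    (hy : y.getLast? = some true) : IsExcited (x ++ a :: b :: y) := by
  cases x with
  | nil => simp at hx
  | cons => cases y using List.reverseRecOn <;> simp_all [IsExcited, List.getLast?_cons]

lemma IsExcited.exists_eq_cons (h : IsExcited w) : ∃ t, w = false :: t := by
  cases w with
  | nil => simp [IsExcited] at h
  | cons a t => exact ⟨t, by simpa [IsExcited] using h.1⟩

lemma strip_cons_true (w : Word) : strip (true :: w) = strip w := by
  simp [strip]

lemma strip_append_false (w : Word) : strip (w ++ [false]) = strip w := by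
  simp only [strip, List.dropWhile_append]
  split_ifs with h
  · rw [List.isEmpty_iff.1 h]
    simp
  · simp

lemma strip_eq_self (h : IsExcited w) : strip w = w := by
  obtain ⟨t, rfl⟩ := h.exists_eq_cons
  obtain ⟨s, rfl⟩ : ∃ s, t = s ++ [true] := by
    cases t using List.reverseRecOn with
    | nil => simp [IsExcited] at h
    | append_singleton s a => exact ⟨s, by simpa [isExcited_cons_false_iff] using h⟩
  simp [strip]

lemma strip_replicate_append_replicate (h : IsExcited w) (m n : ℕ) :
    strip (List.replicate m true ++ w ++ List.replicate n false) = w := by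
  induction m with
  | succ m ih => rwa [List.replicate_succ, List.cons_append, List.cons_append, strip_cons_true]
  | zero =>
    induction n with
    | zero => simpa using strip_eq_self h
    | succ n ih => rwa [List.replicate_succ', ← List.append_assoc, strip_append_false]

theorem IsExcited.induction {motive : Word → Prop} (base : motive [false, true])
    (step : ∀ b t, IsExcited (false :: t) → motive (false :: t) → motive (false :: b :: t)) :
    ∀ w, IsExcited w → motive w
  | false :: true :: [], _ => base
  | false :: b :: c :: t, h => by
    have ht : IsExcited (false :: c :: t) :=
      isExcited_cons_false_iff.2 (by simpa [List.getLast?_cons] using h.2)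
    exact step b _ ht (IsExcited.induction base step _ ht)
  | [], h | [_], h | true :: _ :: _, h | false :: false :: [], h => by
    simp [IsExcited] at h
termination_by w => w.length

lemma IsExcited.exists_eq_append_zero_one :
    ∀ w, IsExcited w → ∃ x y, w = x ++ false :: true :: y ∧
      (x = [] ∨ x.head? = some false) ∧ (y = [] ∨ y.getLast? = some true) := by
  refine IsExcited.induction ⟨[], [], rfl, .inl rfl, .inl rfl⟩ fun b t ht ih => ?_
  cases b
  · obtain ⟨x, y, hxy, -, hy⟩ := ih
    exact ⟨false :: x, y, by rw [hxy, List.cons_append], .inr rfl, hy⟩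
  · exact ⟨[], t, rfl, .inl rfl, .inr (isExcited_cons_false_iff.1 ht)⟩

lemma IsExcited.sorted_or_descent :
    ∀ w, IsExcited w →
      (∃ a b, w = List.replicate (a + 1) false ++ List.replicate (b + 1) true) ∨
      ∃ x y, w = x ++ true :: false :: y ∧ x.head? = some false ∧ y.getLast? = some true := by
  refine IsExcited.induction (.inl ⟨0, 0, rfl⟩) fun b t ht ih => ?_
  rcases ih with ⟨a, c, hac⟩ | ⟨x, y, hxy, hx, hy⟩
  · cases b
    · exact .inl ⟨a + 1, c, by rw [hac]; rfl⟩
    · cases a with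
      | zero => exact .inl ⟨0, c + 1, by simp_all [List.replicate_succ]⟩
      | succ a =>
        refine .inr ⟨[false], List.replicate a false ++ List.replicate (c + 1) true, ?_, rfl,
          ?_⟩
        · simp_all [List.replicate_succ]
        · simp [List.replicate_succ', List.getLast?_append]
  · obtain ⟨x, rfl⟩ : ∃ x', x = false :: x' := by
      cases x with
      | nil => simp at hx
      | cons a x' => exact ⟨x', by simp_all⟩
    simp only [List.cons_append, List.cons.injEq, true_and] at hxy
    subst hxy
    exact .inr ⟨false :: b :: x, y, rfl, rfl, hy⟩

end ExcitedWords

def pairCount (a b : Bool) : Word → ℕ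
  | [] => 0
  | c :: t => (if c = a then t.count b else 0) + pairCount a b t

section PairCount

variable {a b : Bool}

@[simp] lemma pairCount_nil : pairCount a b [] = 0 := rfl

@[simp] lemma pairCount_cons (c : Bool) (t : Word) :
    pairCount a b (c :: t) = (if c = a then t.count b else 0) + pairCount a b t := rfl

lemma pairCount_append (x y : Word) :
    pairCount a b (x ++ y) = pairCount a b x + pairCount a b y + x.count a * y.count b := by
  induction x with
  | nil => simp
  | cons c x ih =>
    simp only [List.cons_append, pairCount_cons, ih, List.count_append, List.count_cons]
    split_ifs <;> simp_all [add_mul]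
    ring

lemma pairCount_swap (hab : a ≠ b) (x y : Word) :
    pairCount a b (x ++ a :: b :: y) = pairCount a b (x ++ b :: a :: y) + 1 := by
  cases a <;> cases b <;> simp_all [pairCount_append] <;> ring

end PairCount

noncomputable def pairWeight (β p : ℝ) (w w' : Word) (i : ℕ) : ℝ :=
  let swapProb := if (pad w).getD i true then 1 - p else p
  β * (1 / 2) * (if strip (setPair (pad w) i false false) = w' then 1 else 0)
    + β * (1 / 2) * (if strip (setPair (pad w) i true true) = w' then 1 else 0)
    + (1 - β) * swapProb * (if strip (swapPair (pad w) i) = w' then 1 else 0)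
    + (1 - β) * (1 - swapProb) * (if w = w' then 1 else 0)

section Kernel

variable {β p : ℝ} {w w' : Word} {i : ℕ}

lemma P_eq_sum_pairWeight (β p : ℝ) (w w' : Word) :
    P β p w w' =
      ((unlike w).map fun i => ((unlike w).length : ℝ)⁻¹ * pairWeight β p w w' i).sum :=
  rfl

lemma pairWeight_nonneg (hβ : β ∈ Icc (0 : ℝ) 1) (hp : p ∈ Icc (0 : ℝ) 1) :
    0 ≤ pairWeight β p w w' i := by
  obtain ⟨hβ0, hβ1⟩ := hβ
  obtain ⟨hp0, hp1⟩ := hp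
  unfold pairWeight
  split_ifs <;> nlinarith

lemma summand_P_nonneg (hβ : β ∈ Icc (0 : ℝ) 1) (hp : p ∈ Icc (0 : ℝ) 1) :
    ∀ r ∈ (unlike w).map (fun i => ((unlike w).length : ℝ)⁻¹ * pairWeight β p w w' i),
      0 ≤ r := by
  intro r hr
  obtain ⟨j, -, rfl⟩ := List.mem_map.1 hr
  exact mul_nonneg (by positivity) (pairWeight_nonneg hβ hp)

lemma P_nonneg (hβ : β ∈ Icc (0 : ℝ) 1) (hp : p ∈ Icc (0 : ℝ) 1) : 0 ≤ P β p w w' := by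
  rw [P_eq_sum_pairWeight]
  exact List.sum_nonneg (summand_P_nonneg hβ hp)

lemma P_pos_of_pairWeight_pos (hβ : β ∈ Icc (0 : ℝ) 1) (hp : p ∈ Icc (0 : ℝ) 1)
    (hi : i ∈ unlike w) (h : 0 < pairWeight β p w w' i) : 0 < P β p w w' := by
  have hlen : (0 : ℝ) < (unlike w).length := by exact_mod_cast List.length_pos_of_mem hi
  rw [P_eq_sum_pairWeight]
  exact (mul_pos (inv_pos.2 hlen) h).trans_le
    (List.single_le_sum (summand_P_nonneg hβ hp) _ (List.mem_map_of_mem hi))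

end Kernel

section Surgery

variable {w T R : Word} {c d : Bool}

lemma setPair_append (a b : Bool) :
    setPair (T ++ c :: d :: R) T.length a b = T ++ a :: b :: R := by
  simp [setPair]

lemma swapPair_append :
    swapPair (T ++ c :: d :: R) T.length = T ++ d :: c :: R := by
  simp [swapPair, setPair]

lemma length_mem_unlike (hpad : pad w = T ++ c :: d :: R) (hcd : c ≠ d) :
    T.length ∈ unlike w := by
  have hlen := congrArg List.length hpad
  simp only [pad, List.length_cons, List.length_append] at hlen
  refine List.mem_filter.2 ⟨List.mem_range.2 (by simp at hlen; omega), ?_⟩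
  simpa [hpad] using hcd

end Surgery

section PairMoves

variable {β p : ℝ} {w w' T R : Word} {c d : Bool}

lemma pairWeight_of_pad (hpad : pad w = T ++ c :: d :: R) :
    pairWeight β p w w' T.length =
      β * (1 / 2) * (if strip (T ++ false :: false :: R) = w' then 1 else 0)
        + β * (1 / 2) * (if strip (T ++ true :: true :: R) = w' then 1 else 0)
        + (1 - β) * (if c then 1 - p else p) * (if strip (T ++ d :: c :: R) = w' then 1 else 0)
        + (1 - β) * (1 - if c then 1 - p else p) * (if w = w' then 1 else 0) := by
  simp only [pairWeight, hpad, setPair_append, swapPair_append]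
  simp

lemma P_pos_of_voter (hβ : β ∈ Ioc (0 : ℝ) 1) (hp : p ∈ Icc (0 : ℝ) 1)
    (hpad : pad w = T ++ c :: d :: R) (hcd : c ≠ d) (b : Bool)
    (hw' : strip (T ++ b :: b :: R) = w') : 0 < P β p w w' := by
  refine P_pos_of_pairWeight_pos (Ioc_subset_Icc_self hβ) hp (length_mem_unlike hpad hcd) ?_
  obtain ⟨hβ0, hβ1⟩ := hβ
  obtain ⟨hp0, hp1⟩ := hp
  rw [pairWeight_of_pad hpad]
  cases b <;> cases c <;> simp only [hw', ↓reduceIte, Bool.false_eq_true] <;> split_ifs <;>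
    nlinarith

lemma P_pos_of_swap10 (hβ : β ∈ Ico (0 : ℝ) 1) (hp : p ∈ Ico (0 : ℝ) 1)
    (hpad : pad w = T ++ true :: false :: R) (hw' : strip (T ++ false :: true :: R) = w') :
    0 < P β p w w' := by
  refine P_pos_of_pairWeight_pos (Ico_subset_Icc_self hβ) (Ico_subset_Icc_self hp)
    (length_mem_unlike hpad (by decide)) ?_
  obtain ⟨hβ0, hβ1⟩ := hβ
  obtain ⟨hp0, hp1⟩ := hp
  rw [pairWeight_of_pad hpad]
  simp only [hw', ↓reduceIte]
  split_ifs <;> nlinarith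

lemma P_pos_of_swap01 (hβ : β ∈ Ico (0 : ℝ) 1) (hp : p ∈ Ioc (0 : ℝ) 1)
    (hpad : pad w = T ++ false :: true :: R) (hw' : strip (T ++ true :: false :: R) = w') :
    0 < P β p w w' := by
  refine P_pos_of_pairWeight_pos (Ico_subset_Icc_self hβ) (Ioc_subset_Icc_self hp)
    (length_mem_unlike hpad (by decide)) ?_
  obtain ⟨hβ0, hβ1⟩ := hβ
  obtain ⟨hp0, hp1⟩ := hp
  rw [pairWeight_of_pad hpad]
  simp only [hw', ↓reduceIte, Bool.false_eq_true]
  split_ifs <;> nlinarith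

lemma P_self_pos (hβ : β ∈ Ico (0 : ℝ) 1) (hp : p ∈ Icc (0 : ℝ) 1)
    (hpad : pad w = T ++ c :: d :: R) (hcd : c ≠ d) (hstay : 0 < 1 - if c then 1 - p else p) :
    0 < P β p w w := by
  refine P_pos_of_pairWeight_pos (Ico_subset_Icc_self hβ) hp (length_mem_unlike hpad hcd) ?_
  obtain ⟨hβ0, hβ1⟩ := hβ
  obtain ⟨hp0, hp1⟩ := hp
  rw [pairWeight_of_pad hpad]
  cases c <;> simp only [↓reduceIte, Bool.false_eq_true] at hstay ⊢ <;> split_ifs <;>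
    nlinarith [mul_pos (sub_pos.2 hβ1) hstay]

end PairMoves

section Moves

variable {β p : ℝ} {t x y : Word}

lemma P_pos_prepend_zero (hβ : β ∈ Ioc (0 : ℝ) 1) (hp : p ∈ Icc (0 : ℝ) 1)
    (ht : IsExcited (false :: t)) : 0 < P β p (false :: t) (false :: false :: t) :=
  P_pos_of_voter hβ hp (T := []) (R := t ++ [false]) rfl (by decide) false <| by
    simpa using strip_replicate_append_replicate (isExcited_cons_false_cons false ht) 0 1

lemma P_pos_drop_zero (hβ : β ∈ Ioc (0 : ℝ) 1) (hp : p ∈ Icc (0 : ℝ) 1)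
    (ht : IsExcited t) : 0 < P β p (false :: t) t :=
  P_pos_of_voter hβ hp (T := []) (R := t ++ [false]) rfl (by decide) true <| by
    simpa using strip_replicate_append_replicate ht 2 1

lemma P_pos_flip_front (hβ : β ∈ Ioc (0 : ℝ) 1) (hp : p ∈ Icc (0 : ℝ) 1)
    (ht : IsExcited (false :: t)) : 0 < P β p (false :: true :: t) (false :: false :: t) :=
  P_pos_of_voter hβ hp (T := [true]) (R := t ++ [false]) rfl (by decide) false <| by
    simpa using strip_replicate_append_replicate (isExcited_cons_false_cons false ht) 1 1

lemma P_pos_append_one (hβ : β ∈ Ioc (0 : ℝ) 1) (hp : p ∈ Icc (0 : ℝ) 1)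
    (hx : IsExcited (x ++ [true])) : 0 < P β p (x ++ [true]) (x ++ [true, true]) :=
  P_pos_of_voter hβ hp (T := true :: x) (c := true) (d := false) (R := []) (by simp [pad])
    (by decide) true <| by
    simpa using strip_replicate_append_replicate (isExcited_append_true_iff.2 hx.1) 1 0

lemma P_pos_insert_one (hβ : β ∈ Ico (0 : ℝ) 1) (hp : p ∈ Ico (0 : ℝ) 1)
    (ht : IsExcited (false :: t)) : 0 < P β p (false :: t) (false :: true :: t) :=
  P_pos_of_swap10 hβ hp (T := []) (R := t ++ [false]) rfl <| by
    simpa using strip_replicate_append_replicate (isExcited_cons_false_cons true ht) 0 1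

lemma P_pos_insert_zero (hβ : β ∈ Ico (0 : ℝ) 1) (hp : p ∈ Ico (0 : ℝ) 1)
    (hx : IsExcited (x ++ [true])) : 0 < P β p (x ++ [true]) (x ++ [false, true]) :=
  P_pos_of_swap10 hβ hp (T := true :: x) (R := []) (by simp [pad]) <| by
    simpa using strip_replicate_append_replicate (w := x ++ [false] ++ [true])
      (isExcited_append_true_iff.2 (by rw [List.head?_append, isExcited_append_true_iff.1 hx]; rfl))
      1 0

lemma P_pos_swap10 (hβ : β ∈ Ico (0 : ℝ) 1) (hp : p ∈ Ico (0 : ℝ) 1)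
    (hx : x.head? = some false) (hy : y.getLast? = some true) :
    0 < P β p (x ++ true :: false :: y) (x ++ false :: true :: y) :=
  P_pos_of_swap10 hβ hp (T := true :: x) (R := y ++ [false]) (by simp [pad]) <| by
    simpa using strip_replicate_append_replicate (isExcited_append_cons_cons false true hx hy) 1 1

lemma P_pos_delete_one (hβ : β ∈ Ico (0 : ℝ) 1) (hp : p ∈ Ioc (0 : ℝ) 1)
    (ht : IsExcited (false :: t)) : 0 < P β p (false :: true :: t) (false :: t) :=
  P_pos_of_swap01 hβ hp (T := [true]) (R := t ++ [false]) rfl <| by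
    simpa using strip_replicate_append_replicate ht 2 1

lemma P_pos_delete_zero (hβ : β ∈ Ico (0 : ℝ) 1) (hp : p ∈ Ioc (0 : ℝ) 1)
    (hx : IsExcited (x ++ [true])) : 0 < P β p (x ++ [false, true]) (x ++ [true]) :=
  P_pos_of_swap01 hβ hp (T := true :: x) (R := [false]) (by simp [pad]) <| by
    simpa using strip_replicate_append_replicate hx 1 2

lemma P_pos_swap01 (hβ : β ∈ Ico (0 : ℝ) 1) (hp : p ∈ Ioc (0 : ℝ) 1)
    (hx : x.head? = some false) (hy : y.getLast? = some true) :
    0 < P β p (x ++ false :: true :: y) (x ++ true :: false :: y) :=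
  P_pos_of_swap01 hβ hp (T := true :: x) (R := y ++ [false]) (by simp [pad]) <| by
    simpa using strip_replicate_append_replicate (isExcited_append_cons_cons true false hx hy) 1 1

lemma P_self_pos_of_isExcited (hβ : β ∈ Ico (0 : ℝ) 1) (hp : p ∈ Icc (0 : ℝ) 1)
    {w : Word} (hw : IsExcited w) : 0 < P β p w w := by
  rcases hp.2.lt_or_eq with hp1 | rfl
  · obtain ⟨x, y, rfl, -, -⟩ := IsExcited.exists_eq_append_zero_one w hw
    exact P_self_pos hβ hp (T := true :: x) (c := false) (d := true) (R := y ++ [false])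
      (by simp [pad]) (by decide) (by simpa using hp1)
  · obtain ⟨t, rfl⟩ := hw.exists_eq_cons
    exact P_self_pos hβ hp (T := []) (R := t ++ [false]) rfl (by decide) (by norm_num)

end Moves

section GroundState

variable {β p : ℝ}

lemma P_groundState_self (β p : ℝ) : P β p groundState groundState = β + (1 - β) * p := by
  have hu : unlike groundState = [0] := rfl
  simp only [P, hu, List.map_cons, List.map_nil, List.sum_cons, List.sum_nil]
  norm_num [groundState, pad, setPair, swapPair, strip, List.cons_ne_nil]
  ring

lemma P_pos_groundState_zeroOne (hβ : β ∈ Ico (0 : ℝ) 1) (hp : p ∈ Ico (0 : ℝ) 1) :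
    0 < P β p groundState [false, true] :=
  P_pos_of_swap10 hβ hp (T := []) (R := []) rfl rfl

lemma P_pos_zeroOne_groundState_of_voter (hβ : β ∈ Ioc (0 : ℝ) 1)
    (hp : p ∈ Icc (0 : ℝ) 1) :
    0 < P β p [false, true] groundState :=
  P_pos_of_voter hβ hp (T := [true, false]) (R := []) rfl (by decide) false rfl

lemma P_pos_zeroOne_groundState_of_swap (hβ : β ∈ Ico (0 : ℝ) 1)
    (hp : p ∈ Ioc (0 : ℝ) 1) :
    0 < P β p [false, true] groundState :=
  P_pos_of_swap01 hβ hp (T := [true]) (R := [false]) rfl rfl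

end GroundState

section MultiStep

variable {β p : ℝ} {n : ℕ} {w w' z : Word}

def successors (z : Word) : List Word :=
  z :: ((unlike z).map fun i => strip (setPair (pad z) i false false)) ++
    ((unlike z).map fun i => strip (setPair (pad z) i true true)) ++
    (unlike z).map fun i => strip (swapPair (pad z) i)

lemma P_eq_zero_of_not_mem_successors (h : w' ∉ successors z) : P β p z w' = 0 := by
  simp only [successors, List.mem_cons, List.mem_append, List.mem_map, not_or, not_exists,
    not_and] at h
  obtain ⟨⟨⟨hz, h00⟩, h11⟩, hswap⟩ := h
  refine List.sum_eq_zero fun r hr => ?_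
  obtain ⟨i, hi, rfl⟩ := List.mem_map.1 hr
  simp [Ne.symm hz, h00 i hi, h11 i hi, hswap i hi]

lemma Pn_nonneg (hβ : β ∈ Icc (0 : ℝ) 1) (hp : p ∈ Icc (0 : ℝ) 1) (n : ℕ)
    (w w' : Word) :
    0 ≤ Pn β p n w w' := by
  induction n generalizing w' with
  | zero => simp only [Pn]; positivity
  | succ n ih => exact tsum_nonneg fun z => mul_nonneg (ih z) (P_nonneg hβ hp)

lemma finite_support_Pn (n : ℕ) (w : Word) : (Function.support (Pn β p n w)).Finite := by
  induction n with
  | zero =>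
    refine (Set.finite_singleton w).subset fun w' hw' => ?_
    by_contra h
    simp [Pn, Ne.symm h] at hw'
  | succ n ih =>
    refine (ih.biUnion fun z _ => (successors z).finite_toSet).subset fun w' hw' => ?_
    obtain ⟨z, hz⟩ : ∃ z, Pn β p n w z * P β p z w' ≠ 0 := by
      by_contra! h
      simp [Pn, h] at hw'
    exact Set.mem_biUnion (left_ne_zero_of_mul hz) <| by
      by_contra h
      exact hz (by rw [P_eq_zero_of_not_mem_successors h, mul_zero])

lemma Pn_succ_pos (hβ : β ∈ Icc (0 : ℝ) 1) (hp : p ∈ Icc (0 : ℝ) 1)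
    (h₁ : 0 < Pn β p n w z) (h₂ : 0 < P β p z w') : 0 < Pn β p (n + 1) w w' := by
  have hsum : Summable fun y => Pn β p n w y * P β p y w' :=
    summable_of_hasFiniteSupport <| (finite_support_Pn n w).subset
      (Function.support_mul_subset_left _ _)
  exact (mul_pos h₁ h₂).trans_le <| hsum.le_tsum z fun y _ =>
    mul_nonneg (Pn_nonneg hβ hp n w y) (P_nonneg hβ hp)

lemma Pn_one (β p : ℝ) (w w' : Word) : Pn β p 1 w w' = P β p w w' := by
  simp only [Pn]
  rw [tsum_eq_single w fun z hz => by simp [Ne.symm hz]]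
  simp

end MultiStep

def Reach (β p : ℝ) : Word → Word → Prop :=
  Relation.ReflTransGen fun w w' => 0 < P β p w w'

section Reach

variable {β p : ℝ}

lemma Reach.exists_Pn_pos (hβ : β ∈ Icc (0 : ℝ) 1) (hp : p ∈ Icc (0 : ℝ) 1) {w w' : Word}
    (h : Reach β p w w') : ∃ n, 0 < Pn β p n w w' := by
  induction h with
  | refl => exact ⟨0, by simp [Pn]⟩
  | tail _ hstep ih =>
    obtain ⟨n, hn⟩ := ih
    exact ⟨n + 1, Pn_succ_pos hβ hp hn hstep⟩

lemma communicate_of_hub (hβ : β ∈ Icc (0 : ℝ) 1) (hp : p ∈ Icc (0 : ℝ) 1)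
    {S : Word → Prop} {hub : Word} (hhub : ∀ w, S w → Reach β p w hub ∧ Reach β p hub w)
    (hloop : ∀ w, S w → 0 < P β p w w) {w w' : Word} (hw : S w) (hw' : S w') :
    Communicate β p w w' := by
  have accessible : ∀ u v, S u → S v → Accessible β p u v := fun u v hu hv => by
    obtain ⟨n, hn⟩ := Reach.exists_Pn_pos hβ hp ((hhub u hu).1.trans (hhub v hv).2)
    exact ⟨n + 1, n.succ_pos, Pn_succ_pos hβ hp hn (hloop v hv)⟩
  exact ⟨accessible w w' hw hw', accessible w' w hw' hw⟩

lemma reach_zeroOne_of_voter (hβ : β ∈ Ioc (0 : ℝ) 1) (hp : p ∈ Icc (0 : ℝ) 1) :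
    ∀ w, IsExcited w → Reach β p w [false, true] :=
  IsExcited.induction .refl fun b t ht ih => by
    cases b
    · exact .head (P_pos_drop_zero hβ hp ht) ih
    · exact .head (P_pos_flip_front hβ hp ht) (.head (P_pos_drop_zero hβ hp ht) ih)

lemma reach_from_zeroOne_of_voter_of_swap10 (hβ : β ∈ Ioo (0 : ℝ) 1)
    (hp : p ∈ Ico (0 : ℝ) 1) :
    ∀ w, IsExcited w → Reach β p [false, true] w :=
  IsExcited.induction .refl fun b t ht ih => by
    cases b
    · exact ih.tail (P_pos_prepend_zero (Ioo_subset_Ioc_self hβ) (Ico_subset_Icc_self hp) ht)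
    · exact ih.tail (P_pos_insert_one (Ioo_subset_Ico_self hβ) hp ht)

lemma reach_from_zeroOne_of_voter_of_swap01 (hβ : β ∈ Ioo (0 : ℝ) 1)
    (hp : p ∈ Ioc (0 : ℝ) 1) (w : Word) (hw : IsExcited w) : Reach β p [false, true] w := by
  suffices ∀ n w, w.length + pairCount true false w ≤ n → IsExcited w →
      Reach β p [false, true] w from this _ w le_rfl hw
  intro n
  induction n with
  | zero =>
    intro w hn hw
    obtain ⟨t, rfl⟩ := hw.exists_eq_cons
    simp at hn
  | succ n ih =>
  intro w hn hw
  rcases IsExcited.sorted_or_descent w hw with ⟨_ | a, b, rfl⟩ | ⟨x, y, rfl, hx, hy⟩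
  · rcases b with _ | b
    · exact .refl
    set x := false :: List.replicate b true
    have hx : IsExcited (x ++ [true]) := isExcited_append_true_iff.2 rfl
    have hw : List.replicate 1 false ++ List.replicate (b + 2) true = x ++ [true, true] := by
      simp [x, List.replicate_succ']
    rw [hw] at hn ⊢
    refine (ih _ ?_ hx).tail
      (P_pos_append_one (Ioo_subset_Ioc_self hβ) (Ioc_subset_Icc_self hp) hx)
    simp only [pairCount_append, List.length_append] at hn ⊢
    simp at hn ⊢
    omega
  · set t := List.replicate a false ++ List.replicate (b + 1) true
    have ht : IsExcited (false :: t) :=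
      isExcited_cons_false_iff.2 (by simp [t, List.replicate_succ'])
    refine (ih (false :: t) ?_ ht).tail
      (P_pos_prepend_zero (Ioo_subset_Ioc_self hβ) (Ioc_subset_Icc_self hp) ht)
    simp [t, List.replicate_succ] at hn ⊢
    omega
  · refine (ih _ ?_ (isExcited_append_cons_cons false true hx hy)).tail
      (P_pos_swap01 (Ioo_subset_Ico_self hβ) hp hx hy)
    rw [pairCount_swap (by decide)] at hn
    simp only [List.length_append, List.length_cons] at hn ⊢
    omega

lemma reach_zeroOne_of_reversible_swaps (hβ : β ∈ Ico (0 : ℝ) 1) (hp : p ∈ Ioo (0 : ℝ) 1)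
    (w : Word) (hw : IsExcited w) :
    Relation.ReflTransGen (fun u v => 0 < P β p u v ∧ 0 < P β p v u) w [false, true] := by
  suffices ∀ n w, pairCount false true w ≤ n → IsExcited w →
      Relation.ReflTransGen (fun u v => 0 < P β p u v ∧ 0 < P β p v u) w [false, true] from
    this _ w le_rfl hw
  have hp₁ : p ∈ Ico (0 : ℝ) 1 := Ioo_subset_Ico_self hp
  have hp₂ : p ∈ Ioc (0 : ℝ) 1 := Ioo_subset_Ioc_self hp
  intro n
  induction n with
  | zero =>
    intro w hn hw
    obtain ⟨x, y, rfl, -⟩ := IsExcited.exists_eq_append_zero_one w hw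
    simp [pairCount_append] at hn
  | succ n ih =>
  intro w hn hw
  obtain ⟨x, y, rfl, hx, hy⟩ := IsExcited.exists_eq_append_zero_one w hw
  rcases hx with rfl | hx <;> rcases hy with rfl | hy
  · exact .refl
  · have ht : IsExcited (false :: y) := isExcited_cons_false_iff.2 hy
    refine .head ⟨P_pos_delete_one hβ hp₂ ht, P_pos_insert_one hβ hp₁ ht⟩ (ih _ ?_ ht)
    simp at hn ⊢
    omega
  · have hx' : IsExcited (x ++ [true]) := isExcited_append_true_iff.2 hx
    refine .head ⟨P_pos_delete_zero hβ hp₂ hx', P_pos_insert_zero hβ hp₁ hx'⟩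
      (ih _ ?_ hx')
    simp [pairCount_append] at hn ⊢
    omega
  · refine .head ⟨P_pos_swap01 hβ hp₂ hx hy, P_pos_swap10 hβ hp₁ hx hy⟩
      (ih _ ?_ (isExcited_append_cons_cons true false hx hy))
    rw [pairCount_swap (by decide)] at hn
    omega

end Reach

section Hub

variable {β p : ℝ}

lemma reach_zeroOne_and_back_of_isExcited (hβ : β ∈ Ico (0 : ℝ) 1)
    (hp : p ∈ Icc (0 : ℝ) 1) (h₀ : (β, p) ≠ (0, 0)) (h₁ : (β, p) ≠ (0, 1)) (w : Word)
    (hw : IsExcited w) :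
    Reach β p w [false, true] ∧ Reach β p [false, true] w := by
  rcases hβ.1.eq_or_lt with rfl | hβ₀
  · have hp' : p ∈ Ioo (0 : ℝ) 1 := ⟨hp.1.lt_of_ne (by rintro rfl; exact h₀ rfl),
      hp.2.lt_of_ne (by rintro rfl; exact h₁ rfl)⟩
    have h := reach_zeroOne_of_reversible_swaps hβ hp' w hw
    exact ⟨Relation.ReflTransGen.mono (fun _ _ h => h.1) _ _ h,
      Relation.ReflTransGen.mono (fun _ _ h => h.2) _ _ (Relation.ReflTransGen.swap _ _ h)⟩
  have hβ' : β ∈ Ioo (0 : ℝ) 1 := ⟨hβ₀, hβ.2⟩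
  refine ⟨reach_zeroOne_of_voter (Ioo_subset_Ioc_self hβ') hp w hw, ?_⟩
  rcases hp.2.lt_or_eq with hp₁ | rfl
  · exact reach_from_zeroOne_of_voter_of_swap10 hβ' ⟨hp.1, hp₁⟩ w hw
  · exact reach_from_zeroOne_of_voter_of_swap01 hβ' ⟨one_pos, le_rfl⟩ w hw

lemma reach_zeroOne_and_back_of_isConfig (hβ : β ∈ Ico (0 : ℝ) 1) (hp : p ∈ Ico (0 : ℝ) 1)
    (h₀ : (β, p) ≠ (0, 0)) (w : Word) (hw : IsConfig w) :
    Reach β p w [false, true] ∧ Reach β p [false, true] w := by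
  rcases hw with rfl | hw
  · refine ⟨.single (P_pos_groundState_zeroOne hβ hp), .single ?_⟩
    rcases hβ.1.eq_or_lt with rfl | hβ₀
    · exact P_pos_zeroOne_groundState_of_swap hβ
        ⟨hp.1.lt_of_ne (by rintro rfl; exact h₀ rfl), hp.2.le⟩
    · exact P_pos_zeroOne_groundState_of_voter ⟨hβ₀, hβ.2.le⟩ (Ico_subset_Icc_self hp)
  · exact reach_zeroOne_and_back_of_isExcited hβ (Ico_subset_Icc_self hp) h₀
      (by rintro ⟨-, rfl⟩; exact hp.2.false) w hw

lemma P_self_pos_of_isConfig (hβ : β ∈ Ico (0 : ℝ) 1) (hp : p ∈ Icc (0 : ℝ) 1)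
    (h₀ : (β, p) ≠ (0, 0)) (w : Word) (hw : IsConfig w) : 0 < P β p w w := by
  rcases hw with rfl | hw
  · show 0 < P β p groundState groundState
    rw [P_groundState_self]
    rcases hβ.1.eq_or_lt with rfl | hβ₀
    · simpa using hp.1.lt_of_ne (by rintro rfl; exact h₀ rfl)
    · nlinarith [hβ.2, hp.1]
  · exact P_self_pos_of_isExcited hβ hp hw

end Hub

/-- Proposition 1: `𝒟₀` is absorbing under `Pr_{β,1}`; if `β ≠ 1` and
`(β,p) ∉ {(0,0),(0,1)}` then all states of `𝒟 ∖ {𝒟₀}` communicate; if moreover `p < 1`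
and `(β,p) ≠ (0,0)` then all states of `𝒟` communicate and the chain is irreducible
and aperiodic. -/
theorem exclusionVoter_communication :
    (∀ β : ℝ, 0 ≤ β → β ≤ 1 → P β 1 groundState groundState = 1) ∧
    (∀ β p : ℝ, 0 ≤ β → β ≤ 1 → 0 ≤ p → p ≤ 1 → β ≠ 1 →
      (β, p) ≠ ((0 : ℝ), (0 : ℝ)) → (β, p) ≠ ((0 : ℝ), (1 : ℝ)) →
      ∀ w w' : Word, IsConfig w → IsConfig w' →
        w ≠ groundState → w' ≠ groundState → Communicate β p w w') ∧
    (∀ β p : ℝ, 0 ≤ β → β ≤ 1 → 0 ≤ p → p < 1 → β ≠ 1 →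
      (β, p) ≠ ((0 : ℝ), (0 : ℝ)) →
      (∀ w w' : Word, IsConfig w → IsConfig w' → Communicate β p w w') ∧
      (∀ w : Word, IsConfig w →
        ∀ d : ℕ, (∀ n : ℕ, 0 < n → 0 < Pn β p n w w → d ∣ n) → d = 1)) := by
  refine ⟨fun β _ _ => by rw [P_groundState_self]; ring, ?_, ?_⟩
  · intro β p hβ₀ hβ₁ hp₀ hp₁ hβ h₀ h₁ w w' hw hw' hwg hw'g
    have hβ : β ∈ Ico (0 : ℝ) 1 := ⟨hβ₀, hβ₁.lt_of_ne hβ⟩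
    have hub := reach_zeroOne_and_back_of_isExcited hβ ⟨hp₀, hp₁⟩ h₀ h₁
    exact communicate_of_hub ⟨hβ₀, hβ₁⟩ ⟨hp₀, hp₁⟩ hub
      (fun w => P_self_pos_of_isExcited hβ ⟨hp₀, hp₁⟩) (hw.resolve_left hwg)
      (hw'.resolve_left hw'g)
  · intro β p hβ₀ hβ₁ hp₀ hp₁ hβ h₀
    have hβ : β ∈ Ico (0 : ℝ) 1 := ⟨hβ₀, hβ₁.lt_of_ne hβ⟩
    have hub := reach_zeroOne_and_back_of_isConfig hβ ⟨hp₀, hp₁⟩ h₀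
    have hloop := P_self_pos_of_isConfig hβ ⟨hp₀, hp₁.le⟩ h₀
    refine ⟨fun w w' => communicate_of_hub ⟨hβ₀, hβ₁⟩ ⟨hp₀, hp₁.le⟩ hub hloop,
      fun w hw d hd => Nat.dvd_one.1 (hd 1 one_pos ?_)⟩
    rw [Pn_one]
    exact hloop w hw

end EV
end

section
/- Suppose β = 0 (pure exclusion) and fix any initial configuration ξ₀ = S₀ ∈ 𝒟. There exists C ∈ (0,∞) (depending only on S₀) such that for every p ∈ [0,1], Pr_{0,p}-almost surely, for all t ∈ ℕ, max_{0 ≤ s ≤ t} N(ξ_s) ≤ C t^{1/2}. -/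
open MeasureTheory Filter
open scoped ENNReal NNReal

namespace EV

/-! Under pure exclusion every move swaps one adjacent pair, so the inversion count `f1`
(pairs of a `0` left of a `1`) grows by at most one per step, whence `f1 ξ_s ≤ f1 S₀ + s`.
The `k`-th `1`-block of a word is preceded by at least `k - 1` zeros, so summing over the
blocks gives `N (N - 1) / 2 ≤ f1`. Hence `N(ξ_s)² ≤ 4 f1(ξ_s) + 1 ≤ (4 f1(S₀) + 5) t` for
`s ≤ t`, and `C = 4 f1(S₀) + 5` works. -/

section Inversions

def inversions : Word → ℕ
  | [] => 0
  | false :: w => w.count true + inversions w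
  | true :: w => inversions w

lemma inversions_append (u v : Word) :
    inversions (u ++ v) = inversions u + inversions v + u.count false * v.count true := by
  induction u with
  | nil => simp [inversions]
  | cons x u ih =>
    cases x
    · simp [inversions, ih]; ring
    · simp [inversions, ih]

lemma inversions_replicate (k : ℕ) (x : Bool) : inversions (List.replicate k x) = 0 := by
  induction k with
  | zero => rfl
  | succ k ih => cases x <;> simp [List.replicate_succ, inversions, ih, List.count_replicate]

lemma inversions_replicate_true_append (k : ℕ) (v : Word) :
    inversions (List.replicate k true ++ v) = inversions v := by
  simp [inversions_append, inversions_replicate, List.count_replicate]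

lemma inversions_append_replicate_false (v : Word) (k : ℕ) :
    inversions (v ++ List.replicate k false) = inversions v := by
  simp [inversions_append, inversions_replicate, List.count_replicate]

lemma eq_replicate_append_dropWhile (w : Word) (b : Bool) :
    w = List.replicate (w.takeWhile (· = b)).length b ++ w.dropWhile (· = b) := by
  conv_lhs => rw [← List.takeWhile_append_dropWhile (p := (· = b)) (l := w)]
  congr 1
  exact List.eq_replicate_of_mem fun x hx => by simpa using List.mem_takeWhile_imp hx

lemma inversions_strip (w : Word) : inversions (strip w) = inversions w := by
  have hw := eq_replicate_append_dropWhile w true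
  have hu := congrArg List.reverse
    (eq_replicate_append_dropWhile (w.dropWhile (· = true)).reverse false)
  rw [List.reverse_reverse, List.reverse_append, List.reverse_replicate] at hu
  conv_rhs => rw [hw, inversions_replicate_true_append, hu, inversions_append_replicate_false]
  rfl

lemma inversions_pad (w : Word) : inversions (pad w) = inversions w := by
  simpa [pad, inversions] using inversions_append_replicate_false w 1

lemma exists_eq_append_cons_cons {u : Word} {i : ℕ} (h : i + 1 < u.length) :
    ∃ a b : Word, ∃ x y : Bool, u = a ++ x :: y :: b ∧ a.length = i := by
  have hi : i < u.length := by omega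
  refine ⟨u.take i, u.drop (i + 2), u[i], u[i + 1], ?_, List.length_take_of_le hi.le⟩
  conv_lhs => rw [← List.take_append_drop i u, List.drop_eq_getElem_cons hi,
    List.drop_eq_getElem_cons h]

lemma swapPair_append_cons_cons (a b : Word) (x y : Bool) :
    swapPair (a ++ x :: y :: b) a.length = a ++ y :: x :: b := by
  simp [swapPair, setPair]

lemma inversions_swapPair_le {u : Word} {i : ℕ} (h : i + 1 < u.length) :
    inversions (swapPair u i) ≤ inversions u + 1 := by
  obtain ⟨a, b, x, y, rfl, rfl⟩ := exists_eq_append_cons_cons h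
  rw [swapPair_append_cons_cons]
  cases x <;> cases y <;> simp [inversions_append, inversions] <;> omega

end Inversions

section Counting

lemma getD_append_singleton_length (v : Word) (x d : Bool) : (v ++ [x]).getD v.length d = x := by
  simp [List.getD_eq_getElem?_getD]

lemma z0_append_singleton {v : Word} (x : Bool) {c : ℕ} (hc : c ≤ v.length) :
    z0 (v ++ [x]) c = z0 v c := by
  unfold z0
  congr 1
  refine Finset.filter_congr fun a ha => ?_
  rw [List.getD_append v [x] true a (by simp at ha; omega)]

lemma z0_length (v : Word) : z0 v v.length = v.count false := by
  induction v using List.reverseRecOn with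
  | nil => rfl
  | append_singleton v x ih =>
    have hcount : z0 (v ++ [x]) (v.length + 1)
        = z0 (v ++ [x]) v.length + if (v ++ [x]).getD v.length true = false then 1 else 0 := by
      simp only [z0, ← Nat.count_eq_card_filter_range, Nat.count_succ]
    rw [List.length_append, List.length_singleton, hcount, z0_append_singleton x le_rfl, ih,
      getD_append_singleton_length]
    cases x <;> simp

lemma f1_append_singleton (v : Word) (x : Bool) :
    f1 (v ++ [x]) = f1 v + if x then v.count false else 0 := by
  have hones : (Finset.range v.length).filter (fun b => (v ++ [x]).getD b false = true)
      = (Finset.range v.length).filter (fun b => v.getD b false = true) :=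
    Finset.filter_congr fun b hb => by
      rw [List.getD_append v [x] false b (Finset.mem_range.mp hb)]
  have hsum : ∑ b ∈ (Finset.range v.length).filter (fun b => v.getD b false = true),
      z0 (v ++ [x]) b = f1 v :=
    Finset.sum_congr rfl fun b hb =>
      z0_append_singleton x (Finset.mem_range.mp (Finset.mem_filter.mp hb).1).le
  conv_lhs => unfold f1
  rw [List.length_append, List.length_singleton, Finset.range_add_one, Finset.filter_insert,
    hones, getD_append_singleton_length]
  cases x
  · simpa using hsum
  · rw [if_pos rfl, Finset.sum_insert (by simp), hsum, z0_append_singleton true le_rfl,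
      z0_length]
    simp [add_comm]

lemma f1_eq_inversions (w : Word) : f1 w = inversions w := by
  induction w using List.reverseRecOn with
  | nil => rfl
  | append_singleton v x ih =>
    rw [f1_append_singleton, inversions_append, ih]
    cases x <;> simp [inversions]

end Counting

section Blocks

def blockStarts (w : Word) : Finset ℕ :=
  (Finset.range w.length).filter
    (fun b => w.getD b false = true ∧ (b = 0 ∨ w.getD (b - 1) true = false))

lemma two_mul_sum_card_filter_lt_add_card {α : Type*} [LinearOrder α] (s : Finset α) :
    2 * ∑ b ∈ s, (s.filter (· < b)).card + s.card = s.card * s.card := by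
  induction s using Finset.induction_on_max with
  | empty => simp
  | insert a s ha ih =>
    have ha' : a ∉ s := fun h => lt_irrefl a (ha a h)
    have hbelow_a : (insert a s).filter (· < a) = s := by
      rw [Finset.filter_insert, if_neg (lt_irrefl a), Finset.filter_true_of_mem ha]
    have hbelow : ∀ b ∈ s, ((insert a s).filter (· < b)).card = (s.filter (· < b)).card :=
      fun b hb => by rw [Finset.filter_insert, if_neg (ha b hb).not_gt]
    rw [Finset.sum_insert ha', Finset.card_insert_of_notMem ha', hbelow_a,
      Finset.sum_congr rfl hbelow]
    linear_combination ih

/-- A block start `b' < b` is sent to the `0` just before it, except `b' = 0`, which is sent to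
the `0` just before `b`. -/
lemma card_blockStarts_lt_le_z0 {w : Word} {b : ℕ} (hb : b ∈ blockStarts w) :
    ((blockStarts w).filter (· < b)).card ≤ z0 w b := by
  simp only [blockStarts, Finset.mem_filter, Finset.mem_range] at hb
  refine Finset.card_le_card_of_injOn (fun b' => (if b' = 0 then b else b') - 1) ?_ ?_
  · intro b' hb'
    simp only [blockStarts, Finset.coe_filter, Finset.mem_filter, Finset.mem_range,
      Set.mem_ofPred_eq] at hb'
    simp only [Finset.coe_filter, Finset.mem_range, Set.mem_ofPred_eq]
    split_ifs with h0
    · exact ⟨by omega, hb.2.2.resolve_left (by omega)⟩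
    · exact ⟨by omega, hb'.1.2.2.resolve_left h0⟩
  · intro b₁ h₁ b₂ h₂ heq
    simp only [Finset.coe_filter, Set.mem_ofPred_eq] at h₁ h₂ heq
    split_ifs at heq <;> omega

lemma nb_mul_self_le (w : Word) : nb w * nb w ≤ 2 * f1 w + nb w := by
  have hsub : blockStarts w ⊆ (Finset.range w.length).filter (fun b => w.getD b false = true) :=
    Finset.monotone_filter_right _ fun _ _ h => h.1
  have hcard := two_mul_sum_card_filter_lt_add_card (blockStarts w)
  have hsum : ∑ b ∈ blockStarts w, ((blockStarts w).filter (· < b)).card ≤ f1 w :=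
    (Finset.sum_le_sum fun b hb => card_blockStarts_lt_le_z0 hb).trans
      (Finset.sum_le_sum_of_subset hsub)
  change (blockStarts w).card * (blockStarts w).card ≤ 2 * f1 w + (blockStarts w).card
  omega

end Blocks

section Dynamics

lemma add_one_lt_length_pad_of_mem_unlike {w : Word} {i : ℕ} (hi : i ∈ unlike w) :
    i + 1 < (pad w).length := by
  simp only [unlike, List.mem_filter, List.mem_range] at hi
  simp only [pad, List.length_cons, List.length_append]
  omega

lemma eq_or_exists_eq_strip_swapPair_of_P_pos {p : ℝ} {w w' : Word} (h : 0 < P 0 p w w') :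
    w' = w ∨ ∃ i ∈ unlike w, w' = strip (swapPair (pad w) i) := by
  by_contra! hne
  refine h.ne' (List.sum_eq_zero fun x hx => ?_)
  obtain ⟨i, hi, rfl⟩ := List.mem_map.mp hx
  simp [Ne.symm hne.1, Ne.symm (hne.2 i hi)]

lemma f1_le_add_one_of_P_pos {p : ℝ} {w w' : Word} (h : 0 < P 0 p w w') :
    f1 w' ≤ f1 w + 1 := by
  rcases eq_or_exists_eq_strip_swapPair_of_P_pos h with rfl | ⟨i, hi, rfl⟩
  · omega
  · rw [f1_eq_inversions, f1_eq_inversions, inversions_strip, ← inversions_pad w]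
    exact inversions_swapPair_le (add_one_lt_length_pad_of_mem_unlike hi)

lemma f1_le_add_of_P_pos {p : ℝ} {x : ℕ → Word} (hx : ∀ t, 0 < P 0 p (x t) (x (t + 1)))
    (s : ℕ) : f1 (x s) ≤ f1 (x 0) + s := by
  induction s with
  | zero => rfl
  | succ s ih => have := f1_le_add_one_of_P_pos (hx s); omega

end Dynamics

section Chain

variable {β p : ℝ} {Ω : Type*} [MeasurableSpace Ω] {μ : Measure Ω} {ξ : ℕ → Ω → Word}

/-- The event `{ξ t = w, ξ (t+1) = w'}` is the countable union, over the values of `ξ` before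
time `t`, of cylinders `{ξ i = path i, i ≤ t+1}`, each null by the Markov property. -/
lemma IsEVChain.measure_step_eq_zero (hξ : IsEVChain β p μ ξ) (t : ℕ) {w w' : Word}
    (h : P β p w w' ≤ 0) : μ {ω | ξ t ω = w ∧ ξ (t + 1) ω = w'} = 0 := by
  let path (v : Fin t → Word) : ℕ → Word :=
    fun i => if h : i < t then v ⟨i, h⟩ else if i = t then w else w'
  have hpath_t (v) : path v t = w := by simp [path]
  have hpath_succ (v) : path v (t + 1) = w' := by simp [path]
  have hsub : {ω | ξ t ω = w ∧ ξ (t + 1) ω = w'}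
      ⊆ ⋃ v : Fin t → Word, {ω | ∀ i ≤ t + 1, ξ i ω = path v i} := by
    rintro ω ⟨hw, hw'⟩
    refine Set.mem_iUnion.mpr ⟨fun i => ξ i ω, fun i hi => ?_⟩
    rcases Nat.lt_or_ge i t with hit | hit
    · simp [path, hit]
    · obtain rfl | rfl : i = t ∨ i = t + 1 := by omega
      · simpa [path] using hw
      · simpa [path] using hw'
  refine measure_mono_null hsub (measure_iUnion_null fun v => ?_)
  rw [hξ.2 t (path v), hpath_t, hpath_succ, ENNReal.ofReal_eq_zero.mpr h, mul_zero]

lemma IsEVChain.ae_P_pos (hξ : IsEVChain β p μ ξ) :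
    ∀ᵐ ω ∂μ, ∀ t, 0 < P β p (ξ t ω) (ξ (t + 1) ω) := by
  rw [ae_all_iff]
  intro t
  simp only [ae_iff, not_lt]
  have hsub : {ω | P β p (ξ t ω) (ξ (t + 1) ω) ≤ 0}
      ⊆ ⋃ (ww : Word × Word) (_ : P β p ww.1 ww.2 ≤ 0),
          {ω | ξ t ω = ww.1 ∧ ξ (t + 1) ω = ww.2} :=
    fun ω hω => Set.mem_iUnion₂.mpr ⟨(ξ t ω, ξ (t + 1) ω), hω, rfl, rfl⟩
  exact measure_mono_null hsub
    (measure_iUnion_null fun _ => measure_iUnion_null fun h => hξ.measure_step_eq_zero t h)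

end Chain

lemma le_mul_rpow_half_of_sq_le {n c t : ℝ} (hc : 1 ≤ c) (h : n ^ 2 ≤ c * t) :
    n ≤ c * t ^ ((1 : ℝ) / 2) := by
  rw [← Real.sqrt_eq_rpow]
  calc n ≤ |n| := le_abs_self n
    _ ≤ √(c * t) := Real.abs_le_sqrt h
    _ = √c * √t := Real.sqrt_mul (by linarith) t
    _ ≤ c * √t := by gcongr; exact Real.sqrt_le_self_iff.mpr (Or.inr hc)

theorem numBlocks_max_le_const_sqrt_general
    (S₀ : Word) :
    ∃ C : ℝ, 0 < C ∧
      ∀ p : ℝ, 0 ≤ p → p ≤ 1 →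
        ∀ (Ω : Type) (_ : MeasurableSpace Ω) (μ : Measure Ω),
          IsProbabilityMeasure μ →
          ∀ ξ : ℕ → Ω → Word, IsEVChain 0 p μ ξ → (∀ᵐ ω ∂μ, ξ 0 ω = S₀) →
            ∀ᵐ ω ∂μ, ∀ t : ℕ, 0 < t → ∀ s ≤ t,
              (nb (ξ s ω) : ℝ) ≤ C * (t : ℝ) ^ ((1 : ℝ) / 2) := by
  refine ⟨4 * f1 S₀ + 5, by positivity, fun p _ _ Ω _ μ _ ξ hξ hξ₀ => ?_⟩
  filter_upwards [hξ.ae_P_pos, hξ₀] with ω hP hω₀ t ht s hst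
  have hf1 : (f1 (ξ s ω) : ℝ) ≤ f1 S₀ + t := by
    have := f1_le_add_of_P_pos hP s
    rw [hω₀] at this
    exact_mod_cast this.trans (by omega)
  have hnb : (nb (ξ s ω) : ℝ) * nb (ξ s ω) ≤ 2 * f1 (ξ s ω) + nb (ξ s ω) := by
    exact_mod_cast nb_mul_self_le (ξ s ω)
  have hnb_sq : (nb (ξ s ω) : ℝ) ^ 2 ≤ 4 * f1 (ξ s ω) + 1 := by
    nlinarith [sq_nonneg ((nb (ξ s ω) : ℝ) - 1)]
  have ht1 : (1 : ℝ) ≤ t := by exact_mod_cast ht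
  have hf1₀ : (f1 S₀ : ℝ) ≤ f1 S₀ * t := le_mul_of_one_le_right (by positivity) ht1
  refine le_mul_rpow_half_of_sq_le (by norm_cast; omega) ?_
  linarith

/-- Theorem 8(i): for pure exclusion (`β = 0`) there is a constant `C ∈ (0,∞)`,
depending only on the initial configuration, such that for every `p ∈ [0,1]`, a.s.,
for all `t ∈ ℕ`, `max_{0≤s≤t} N(ξ_s) ≤ C t^{1/2}`. -/
theorem numBlocks_max_le_const_sqrt
    (S₀ : Word) (hS₀ : IsConfig S₀) :
    ∃ C : ℝ, 0 < C ∧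
      ∀ p : ℝ, 0 ≤ p → p ≤ 1 →
        ∀ (Ω : Type) (_ : MeasurableSpace Ω) (μ : Measure Ω),
          IsProbabilityMeasure μ →
          ∀ ξ : ℕ → Ω → Word, IsEVChain 0 p μ ξ → (∀ᵐ ω ∂μ, ξ 0 ω = S₀) →
            ∀ᵐ ω ∂μ, ∀ t : ℕ, 0 < t → ∀ s ≤ t,
              (nb (ξ s ω) : ℝ) ≤ C * (t : ℝ) ^ ((1 : ℝ) / 2) :=
  numBlocks_max_le_const_sqrt_general S₀

end EV
end

section
/- For every configuration S ∈ 𝒟, the following inequalities hold: (1/2)|S| ≤ f₁(S) ≤ (1/4)|S|², (1/4)|S|² ≤ f₂(S) ≤ (1/8)|S|³, and f₂(S) ≤ |S| f₁(S) ≤ 2 (f₁(S))². -/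
open MeasureTheory Filter
open scoped ENNReal NNReal

namespace EV

/-! Let `S` have `Z` zeros and `O` ones, so `Z + O = |S|` and `Z, O ≥ 1`. Every `1` has
between one and `Z` zeros to its left, the last `1` exactly `Z`; every `0` has at most `O` ones
to its right, the first `0` exactly `O`. Hence `|S| - 1 ≤ f₁ ≤ OZ`, and, since `f₁` also counts
the ones to the right of each zero, `Z² + O² ≤ 2 f₂ ≤ (Z + O) f₁`. The stated inequalities follow
from these by AM-GM. -/

section Counting

open Finset

variable (w : Word)

def ones : Finset ℕ := (range w.length).filter (fun b => w.getD b false = true)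

def zeros : Finset ℕ := (range w.length).filter (fun a => w.getD a true = false)

def twoF2 : ℕ :=
  ∑ b ∈ ones w, z0 w b ^ 2 + ∑ a ∈ zeros w, o1 w (a + 1) ^ 2

lemma twoF2_eq : (twoF2 w : ℝ) = 2 * f2 w := by
  simp only [twoF2, f2, ones, zeros]
  push_cast
  ring

lemma getD_true_eq_false_iff {i : ℕ} (hi : i < w.length) :
    w.getD i true = false ↔ ¬ w.getD i false = true := by
  rw [List.getD_eq_getElem w true hi, List.getD_eq_getElem w false hi]
  cases w[i] <;> simp

lemma card_ones_add_card_zeros : #(ones w) + #(zeros w) = w.length := by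
  have hzeros : zeros w = (range w.length).filter (fun a => ¬ w.getD a false = true) :=
    filter_congr fun a ha => getD_true_eq_false_iff w (mem_range.1 ha)
  rw [ones, hzeros, card_filter_add_card_filter_not, card_range]

variable {w}

lemma notMem_ones_of_mem_zeros {a : ℕ} (ha : a ∈ zeros w) : a ∉ ones w := by
  simp only [zeros, ones, mem_filter, mem_range] at ha ⊢
  exact fun h => (getD_true_eq_false_iff w ha.1).1 ha.2 h.2

variable (w)

lemma z0_eq_card_filter_zeros (c : ℕ) : z0 w c = #((zeros w).filter (· < c)) := by
  have hlt : ∀ a, w.getD a true = false → a < w.length := fun a ha => by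
    by_contra! h
    rw [List.getD_eq_default w true h] at ha
    exact Bool.noConfusion ha
  unfold z0 zeros
  congr 1
  ext a
  simp only [mem_filter, mem_range]
  exact ⟨fun h => ⟨⟨hlt a h.2, h.2⟩, h.1⟩, fun h => ⟨h.2, h.1.2⟩⟩

lemma o1_eq_card_filter_ones (c : ℕ) : o1 w c = #((ones w).filter (c ≤ ·)) := by
  unfold o1 ones
  congr 1
  ext b
  simp only [mem_filter, mem_Ico, mem_range]
  tauto

lemma z0_le_card_zeros (c : ℕ) : z0 w c ≤ #(zeros w) :=
  (z0_eq_card_filter_zeros w c).trans_le (card_filter_le _ _)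

lemma o1_le_card_ones (c : ℕ) : o1 w c ≤ #(ones w) :=
  (o1_eq_card_filter_ones w c).trans_le (card_filter_le _ _)

/-- Both sides count the pairs (`0` at position `a`, `1` at position `b`) with `a < b`. -/
lemma f1_eq_sum_o1 : f1 w = ∑ a ∈ zeros w, o1 w (a + 1) := by
  have hf1 : f1 w = ∑ b ∈ ones w, z0 w b := rfl
  simp only [hf1, z0_eq_card_filter_zeros, o1_eq_card_filter_ones, Nat.add_one_le_iff]
  exact (sum_card_bipartiteAbove_eq_sum_card_bipartiteBelow (r := (· < ·))).symm

lemma f1_le_card_ones_mul_card_zeros : f1 w ≤ #(ones w) * #(zeros w) :=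
  (sum_le_card_nsmul (ones w) (z0 w) _ fun b _ => z0_le_card_zeros w b).trans_eq
    (smul_eq_mul _ _)

lemma _root_.Finset.sum_sq_le_mul_sum {ι R : Type*} [Semiring R] [PartialOrder R]
    [IsOrderedRing R] {s : Finset ι} {g : ι → R} {M : R} (hg : ∀ i ∈ s, 0 ≤ g i)
    (hM : ∀ i ∈ s, g i ≤ M) : ∑ i ∈ s, g i ^ 2 ≤ M * ∑ i ∈ s, g i := by
  rw [mul_sum]
  exact sum_le_sum fun i hi => by rw [sq]; exact mul_le_mul_of_nonneg_right (hM i hi) (hg i hi)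

lemma twoF2_le_length_mul_f1 : twoF2 w ≤ w.length * f1 w := by
  have hones : ∑ b ∈ ones w, z0 w b ^ 2 ≤ #(zeros w) * f1 w :=
    sum_sq_le_mul_sum (fun _ _ => Nat.zero_le _) fun b _ => z0_le_card_zeros w b
  have hzeros : ∑ a ∈ zeros w, o1 w (a + 1) ^ 2 ≤ #(ones w) * f1 w := by
    rw [f1_eq_sum_o1]
    exact sum_sq_le_mul_sum (fun _ _ => Nat.zero_le _) fun a _ => o1_le_card_ones w (a + 1)
  rw [twoF2, ← card_ones_add_card_zeros, add_mul]
  omega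

end Counting

section Config

open Finset

variable {w : Word}

lemma zero_mem_zeros (hhead : w.head? = some false) : 0 ∈ zeros w := by
  cases w with
  | nil => simp at hhead
  | cons x t => simp_all [zeros]

lemma length_sub_one_mem_ones (hlast : w.getLast? = some true) : w.length - 1 ∈ ones w := by
  rw [List.getLast?_eq_getElem?] at hlast
  have hlt : w.length - 1 < w.length := (List.getElem?_eq_some_iff.1 hlast).1
  simp only [ones, mem_filter, mem_range, List.getD_eq_getElem?_getD, hlast, Option.getD_some,
    and_true]
  exact hlt

lemma z0_length_sub_one (hlast : w.getLast? = some true) :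
    z0 w (w.length - 1) = #(zeros w) := by
  rw [z0_eq_card_filter_zeros, filter_true_of_mem]
  intro a ha
  have hne : a ≠ w.length - 1 := fun h =>
    notMem_ones_of_mem_zeros ha (h ▸ length_sub_one_mem_ones hlast)
  have hlt : a < w.length := mem_range.1 (mem_filter.1 ha).1
  omega

lemma o1_one (hhead : w.head? = some false) : o1 w 1 = #(ones w) := by
  rw [o1_eq_card_filter_ones, filter_true_of_mem]
  intro b hb
  have hne : b ≠ 0 := fun h => notMem_ones_of_mem_zeros (zero_mem_zeros hhead) (h ▸ hb)
  omega

lemma one_le_z0 (hhead : w.head? = some false) {b : ℕ} (hb : 0 < b) : 1 ≤ z0 w b := by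
  rw [z0_eq_card_filter_zeros]
  exact card_pos.2 ⟨0, mem_filter.2 ⟨zero_mem_zeros hhead, hb⟩⟩

/-- The last `1` sees all `0`s to its left and every other `1` sees at least the first `0`. -/
lemma length_le_f1_add_one (hhead : w.head? = some false) (hlast : w.getLast? = some true) :
    w.length ≤ f1 w + 1 := by
  have hmem := length_sub_one_mem_ones hlast
  have hrest : #((ones w).erase (w.length - 1)) ≤ ∑ b ∈ (ones w).erase (w.length - 1), z0 w b := by
    simpa using card_nsmul_le_sum _ (z0 w) 1 fun b hb =>
      one_le_z0 hhead (pos_of_ne_zero fun h =>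
        notMem_ones_of_mem_zeros (zero_mem_zeros hhead) (h ▸ mem_of_mem_erase hb))
  have hsplit : f1 w = z0 w (w.length - 1) + ∑ b ∈ (ones w).erase (w.length - 1), z0 w b :=
    (add_sum_erase _ _ hmem).symm
  rw [card_erase_of_mem hmem] at hrest
  have hcard := card_ones_add_card_zeros w
  have hlast_z0 := z0_length_sub_one hlast
  have hones_pos := card_pos.2 ⟨_, hmem⟩
  omega

lemma sq_add_sq_le_twoF2 (hhead : w.head? = some false) (hlast : w.getLast? = some true) :
    #(zeros w) ^ 2 + #(ones w) ^ 2 ≤ twoF2 w := by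
  have hones := single_le_sum (fun b _ => Nat.zero_le (z0 w b ^ 2)) (length_sub_one_mem_ones hlast)
  have hzeros := single_le_sum (fun a _ => Nat.zero_le (o1 w (a + 1) ^ 2)) (zero_mem_zeros hhead)
  rw [z0_length_sub_one hlast] at hones
  rw [zero_add, o1_one hhead] at hzeros
  exact add_le_add hones hzeros

end Config

/-- Basic inequalities between `|S|`, `f₁` and `f₂`:
`(1/2)|S| ≤ f₁(S) ≤ (1/4)|S|²`, `(1/4)|S|² ≤ f₂(S) ≤ (1/8)|S|³`
and `f₂(S) ≤ |S| f₁(S) ≤ 2 f₁(S)²` for every `S ∈ 𝒟`. -/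
theorem f1_f2_inequalities (S : Word) (hS : IsConfig S) :
    ((1 / 2 : ℝ) * (hz S : ℝ) ≤ (f1 S : ℝ) ∧ (f1 S : ℝ) ≤ (1 / 4 : ℝ) * (hz S : ℝ) ^ 2) ∧
    ((1 / 4 : ℝ) * (hz S : ℝ) ^ 2 ≤ f2 S ∧ f2 S ≤ (1 / 8 : ℝ) * (hz S : ℝ) ^ 3) ∧
    (f2 S ≤ (hz S : ℝ) * (f1 S : ℝ) ∧ (hz S : ℝ) * (f1 S : ℝ) ≤ 2 * (f1 S : ℝ) ^ 2) := by
  rcases hS with rfl | ⟨hhead, hlast⟩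
  · norm_num [hz, f1, f2]
  have hO : 1 ≤ ((ones S).card : ℝ) := by
    exact_mod_cast Finset.card_pos.2 ⟨_, length_sub_one_mem_ones hlast⟩
  have hZ : 1 ≤ ((zeros S).card : ℝ) := by
    exact_mod_cast Finset.card_pos.2 ⟨_, zero_mem_zeros hhead⟩
  have hlen : ((ones S).card : ℝ) + (zeros S).card = hz S := by
    exact_mod_cast card_ones_add_card_zeros S
  have hf1_low : (hz S : ℝ) ≤ f1 S + 1 := by exact_mod_cast length_le_f1_add_one hhead hlast
  have hf1_up : (f1 S : ℝ) ≤ (ones S).card * (zeros S).card := by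
    exact_mod_cast f1_le_card_ones_mul_card_zeros S
  have hf2_low : ((zeros S).card : ℝ) ^ 2 + (ones S).card ^ 2 ≤ 2 * f2 S := by
    rw [← twoF2_eq]; exact_mod_cast sq_add_sq_le_twoF2 hhead hlast
  have hf2_up : 2 * f2 S ≤ hz S * f1 S := by
    rw [← twoF2_eq]; exact_mod_cast twoF2_le_length_mul_f1 S
  rw [← hlen] at hf1_low hf2_up ⊢
  refine ⟨⟨by linarith, ?_⟩, ⟨?_, ?_⟩, ?_, ?_⟩
  all_goals nlinarith [sq_nonneg (((ones S).card : ℝ) - (zeros S).card)]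

end EV
end

section
/- Let N ∈ ℕ and let n₁, n₂, …, n_N be nonnegative real numbers. If, for some A, B > 0, Σ_{i=1}^N n_i² ≤ A and Σ_{i=1}^N i·n_i ≤ B, then Σ_{i=1}^N n_i ≤ (6AB)^{1/3}. -/
open MeasureTheory Filter
open scoped ENNReal NNReal

/-! Write `S = ∑ nᵢ` and `Sⱼ = ∑_{i ≤ j} nᵢ`. Expanding the square gives `S² ≤ 2 ∑ⱼ nⱼ Sⱼ`;
Cauchy–Schwarz bounds each partial sum by `Sⱼ ≤ √(jA)`, and once more
`∑ⱼ √j nⱼ ≤ √((∑ j nⱼ) S) ≤ √(BS)`. Hence `S² ≤ 2 √A √(BS)`, i.e. `S³ ≤ 4AB ≤ 6AB`. -/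

section

open Finset

variable {ι : Type*}

theorem Finset.sum_le_sqrt_card_mul_of_sum_sq_le {s : Finset ι} {f : ι → ℝ} {A : ℝ}
    (h : ∑ i ∈ s, f i ^ 2 ≤ A) : ∑ i ∈ s, f i ≤ √(#s * A) :=
  Real.le_sqrt_of_sq_le <| sq_sum_le_card_mul_sum_sq.trans (by gcongr)

theorem Finset.sq_sum_sqrt_mul_le_sum_mul_mul_sum (s : Finset ι) {w f : ι → ℝ}
    (hw : ∀ i ∈ s, 0 ≤ w i) (hf : ∀ i ∈ s, 0 ≤ f i) :
    (∑ i ∈ s, √(w i) * f i) ^ 2 ≤ (∑ i ∈ s, w i * f i) * ∑ i ∈ s, f i := by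
  have hsplit : ∀ i ∈ s, √(w i) * f i = (√(w i) * √(f i)) * √(f i) := fun i hi => by
    rw [mul_assoc, Real.mul_self_sqrt (hf i hi)]
  have hsq : ∀ i ∈ s, (√(w i) * √(f i)) ^ 2 = w i * f i := fun i hi => by
    rw [mul_pow, Real.sq_sqrt (hw i hi), Real.sq_sqrt (hf i hi)]
  have hsq' : ∀ i ∈ s, √(f i) ^ 2 = f i := fun i hi => Real.sq_sqrt (hf i hi)
  simpa only [sum_congr rfl hsplit, sum_congr rfl hsq, sum_congr rfl hsq'] using
    sum_mul_sq_le_sq_mul_sq s (fun i => √(w i) * √(f i)) (fun i => √(f i))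

theorem Finset.sq_sum_Icc_add_sum_sq {R : Type*} [CommSemiring R] (f : ℕ → R) (N : ℕ) :
    (∑ i ∈ Icc 1 N, f i) ^ 2 + ∑ i ∈ Icc 1 N, f i ^ 2
      = 2 * ∑ j ∈ Icc 1 N, f j * ∑ i ∈ Icc 1 j, f i := by
  induction N with
  | zero => simp
  | succ N ih =>
    simp only [sum_Icc_succ_top (Nat.le_add_left 1 N)]
    calc _ = ((∑ i ∈ Icc 1 N, f i) ^ 2 + ∑ i ∈ Icc 1 N, f i ^ 2)
          + 2 * (f (N + 1) * (∑ i ∈ Icc 1 N, f i + f (N + 1))) := by ring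
      _ = _ := by rw [ih]; ring

theorem sq_sum_Icc_le_two_mul_sqrt_mul_sqrt {N : ℕ} {n : ℕ → ℝ} {A B : ℝ}
    (hn : ∀ i ∈ Icc 1 N, 0 ≤ n i) (h1 : ∑ i ∈ Icc 1 N, n i ^ 2 ≤ A)
    (h2 : ∑ i ∈ Icc 1 N, (i : ℝ) * n i ≤ B) :
    (∑ i ∈ Icc 1 N, n i) ^ 2 ≤ 2 * √A * √(B * ∑ i ∈ Icc 1 N, n i) := by
  have partial_sum_le : ∀ j ∈ Icc 1 N, ∑ i ∈ Icc 1 j, n i ≤ √j * √A := fun j hj => by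
    have hsub : Icc 1 j ⊆ Icc 1 N := Icc_subset_Icc_right (mem_Icc.mp hj).2
    have h := sum_le_sqrt_card_mul_of_sum_sq_le <|
      (sum_le_sum_of_subset_of_nonneg hsub fun i _ _ => sq_nonneg (n i)).trans h1
    rwa [Nat.card_Icc, Nat.add_sub_cancel, Real.sqrt_mul (Nat.cast_nonneg j)] at h
  have weighted_le : ∑ j ∈ Icc 1 N, √j * n j ≤ √(B * ∑ i ∈ Icc 1 N, n i) :=
    Real.le_sqrt_of_sq_le <|
      (sq_sum_sqrt_mul_le_sum_mul_mul_sum _ (fun i _ => Nat.cast_nonneg i) hn).trans <|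
        mul_le_mul_of_nonneg_right h2 (sum_nonneg hn)
  calc (∑ i ∈ Icc 1 N, n i) ^ 2
      ≤ 2 * ∑ j ∈ Icc 1 N, n j * ∑ i ∈ Icc 1 j, n i := by
        linarith [sq_sum_Icc_add_sum_sq n N, sum_nonneg fun i (_ : i ∈ Icc 1 N) => sq_nonneg (n i)]
    _ ≤ 2 * ∑ j ∈ Icc 1 N, n j * (√j * √A) := by
        gcongr with j hj
        exacts [hn j hj, partial_sum_le j hj]
    _ = 2 * √A * ∑ j ∈ Icc 1 N, √j * n j := by
        simp only [mul_sum]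
        exact sum_congr rfl fun j _ => by ring
    _ ≤ 2 * √A * √(B * ∑ i ∈ Icc 1 N, n i) := by gcongr

end

namespace EV

theorem sum_le_cube_root_of_sq_sum_and_weighted_sum_general
    (N : ℕ) (n : ℕ → ℝ) (hn : ∀ i ∈ Finset.Icc 1 N, 0 ≤ n i)
    (A B : ℝ)
    (h1 : ∑ i ∈ Finset.Icc 1 N, n i ^ 2 ≤ A)
    (h2 : ∑ i ∈ Finset.Icc 1 N, (i : ℝ) * n i ≤ B) :
    ∑ i ∈ Finset.Icc 1 N, n i ≤ (6 * A * B) ^ ((1 : ℝ) / 3) := by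
  set S := ∑ i ∈ Finset.Icc 1 N, n i
  have hS : 0 ≤ S := Finset.sum_nonneg hn
  have hA : 0 ≤ A := (Finset.sum_nonneg fun i _ => sq_nonneg (n i)).trans h1
  have hB : 0 ≤ B := (Finset.sum_nonneg fun i hi => mul_nonneg i.cast_nonneg (hn i hi)).trans h2
  have hquartic : S ^ 3 * S ≤ 4 * A * B * S :=
    calc S ^ 3 * S = (S ^ 2) ^ 2 := by ring
      _ ≤ (2 * √A * √(B * S)) ^ 2 :=
        pow_le_pow_left₀ (sq_nonneg S) (sq_sum_Icc_le_two_mul_sqrt_mul_sqrt hn h1 h2) 2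
      _ = 4 * A * B * S := by
        rw [mul_pow, mul_pow, Real.sq_sqrt hA, Real.sq_sqrt (mul_nonneg hB hS)]
        ring
  have hcube : S ^ 3 ≤ 4 * A * B := by
    rcases hS.eq_or_lt with hS0 | hSpos
    · rw [← hS0, zero_pow three_ne_zero]
      positivity
    · exact le_of_mul_le_mul_right hquartic hSpos
  rw [one_div, Real.le_rpow_inv_iff_of_pos hS (by positivity) three_pos,
    Real.rpow_ofNat]
  linarith [mul_nonneg hA hB]

/-- Lemma 14 (elementary inequality): if `n₁,…,n_N ≥ 0`, `Σ nᵢ² ≤ A` and `Σ i·nᵢ ≤ B`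
for some `A, B > 0`, then `Σ nᵢ ≤ (6AB)^{1/3}`. -/
theorem sum_le_cube_root_of_sq_sum_and_weighted_sum
    (N : ℕ) (hN : 0 < N) (n : ℕ → ℝ) (hn : ∀ i ∈ Finset.Icc 1 N, 0 ≤ n i)
    (A B : ℝ) (hA : 0 < A) (hB : 0 < B)
    (h1 : ∑ i ∈ Finset.Icc 1 N, n i ^ 2 ≤ A)
    (h2 : ∑ i ∈ Finset.Icc 1 N, (i : ℝ) * n i ≤ B) :
    ∑ i ∈ Finset.Icc 1 N, n i ≤ (6 * A * B) ^ ((1 : ℝ) / 3) :=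
  sum_le_cube_root_of_sq_sum_and_weighted_sum_general N n hn A B h1 h2

end EV
end
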